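/- arXiv:1702.02866 — 4 statements merged into one kernel-verified Lean document; each statement's English description precedes it below -/
import Mathlib

section
/- Let λ > 0. If λ is not an integer power of 2, then the level set L(λ) = {(x,y) ∈ ℝ⁺×ℝ⁺ : δ(x,y) = λ} is empty. Moreover, for every j ∈ ℤ, L(2^j) = ⋃_{I ∈ 𝒟^j} (I_l × I_r) ∪ (I_r × I_l), where I_l and I_r denote the left and right halves of the dyadic interval I; consequently δ(x,y) = Σ_{j∈ℤ} 2^j χ_{L(2^j)}(x,y) for all x,y ∈ ℝ⁺. -/
/-!
For `x ≥ 0` the dyadic interval of length `2^i` containing `x` is the one with index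
`⌊x / 2^i⌋₊`, and passing from length `2^i` to `2^(i+1)` halves this index. So the scales
`i` at which `x` and `y` share a dyadic interval form an up-set of `ℤ`, bounded below by
`log₂ |x - y|` when `x ≠ y`, and `δ(x, y) = 2^J` for its least element `J`. Thus
`δ(x, y) = 2^j` exactly when the indices of `x` and `y` at scale `2^(j-1)` differ but
agree after halving, i.e. are `2k` and `2k+1`: `x` and `y` lie in opposite halves of the
`k`-th dyadic interval of length `2^j`.
-/

open MeasureTheory Set Filter

/-- The dyadic distance on ℝ⁺: the infimum of the lengths of the dyadic
intervals `[k·2^{-j}, (k+1)·2^{-j})` containing both points (and `0` on the diagonal). -/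
noncomputable def dyadicDist (x y : ℝ) : ℝ :=
  if x = y then 0
  else sInf {r : ℝ | ∃ (j : ℤ) (k : ℕ), r = (2:ℝ) ^ (-j) ∧
    x ∈ Set.Ico ((k : ℝ) * (2:ℝ) ^ (-j)) (((k : ℝ) + 1) * (2:ℝ) ^ (-j)) ∧
    y ∈ Set.Ico ((k : ℝ) * (2:ℝ) ^ (-j)) (((k : ℝ) + 1) * (2:ℝ) ^ (-j))}

noncomputable def dyadicIndex (i : ℤ) (x : ℝ) : ℕ := ⌊x / 2 ^ i⌋₊

lemma mem_Ico_iff_dyadicIndex {x : ℝ} {i : ℤ} {k : ℕ} :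
    x ∈ Ico ((k : ℝ) * 2 ^ i) ((k + 1) * 2 ^ i) ↔ 0 ≤ x ∧ dyadicIndex i x = k := by
  have hpos : (0 : ℝ) < 2 ^ i := zpow_pos two_pos i
  rw [mem_Ico, dyadicIndex]
  constructor
  · rintro ⟨hlo, hhi⟩
    have hx : 0 ≤ x := (mul_nonneg k.cast_nonneg hpos.le).trans hlo
    exact ⟨hx, (Nat.floor_eq_iff (div_nonneg hx hpos.le)).2
      ⟨(le_div_iff₀ hpos).2 hlo, (div_lt_iff₀ hpos).2 hhi⟩⟩
  · rintro ⟨hx, hk⟩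
    obtain ⟨hlo, hhi⟩ := (Nat.floor_eq_iff (div_nonneg hx hpos.le)).1 hk
    exact ⟨(le_div_iff₀ hpos).1 hlo, (div_lt_iff₀ hpos).1 hhi⟩

lemma dyadicIndex_add_one (i : ℤ) (x : ℝ) : dyadicIndex (i + 1) x = dyadicIndex i x / 2 := by
  rw [dyadicIndex, dyadicIndex, zpow_add_one₀ two_ne_zero, ← div_div, Nat.floor_div_ofNat]

lemma two_zpow_eq_two_mul_two_zpow_sub_one (j : ℤ) : (2 : ℝ) ^ j = 2 * 2 ^ (j - 1) := by
  rw [← zpow_one_add₀ two_ne_zero, add_sub_cancel]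

lemma mem_Ico_left_half_iff {x : ℝ} {j : ℤ} {k : ℕ} :
    x ∈ Ico ((k : ℝ) * 2 ^ j) (k * 2 ^ j + 2 ^ (j - 1)) ↔
      0 ≤ x ∧ dyadicIndex (j - 1) x = 2 * k := by
  rw [← mem_Ico_iff_dyadicIndex, two_zpow_eq_two_mul_two_zpow_sub_one j]
  push_cast
  ring_nf

lemma mem_Ico_right_half_iff {x : ℝ} {j : ℤ} {k : ℕ} :
    x ∈ Ico ((k : ℝ) * 2 ^ j + 2 ^ (j - 1)) ((k + 1) * 2 ^ j) ↔
      0 ≤ x ∧ dyadicIndex (j - 1) x = 2 * k + 1 := by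
  rw [← mem_Ico_iff_dyadicIndex, two_zpow_eq_two_mul_two_zpow_sub_one j]
  push_cast
  ring_nf

def dyadicScales (x y : ℝ) : Set ℤ := {i | dyadicIndex i x = dyadicIndex i y}

lemma dyadicScales_mono {x y : ℝ} {i i' : ℤ} (hi : i ∈ dyadicScales x y) (hii' : i ≤ i') :
    i' ∈ dyadicScales x y := by
  induction i', hii' using Int.leInduction with
  | base => exact hi
  | succ n _ hn =>
    simp only [dyadicScales, mem_ofPred_eq, dyadicIndex_add_one] at hn ⊢
    rw [hn]

lemma dyadicScales_nonempty (x y : ℝ) : (dyadicScales x y).Nonempty := by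
  obtain ⟨n, hn⟩ := pow_unbounded_of_one_lt (max x y) one_lt_two
  have hpos : (0 : ℝ) < 2 ^ n := pow_pos two_pos n
  refine ⟨n, ?_⟩
  simp only [dyadicScales, mem_ofPred_eq, dyadicIndex, zpow_natCast]
  rw [Nat.floor_eq_zero.2, Nat.floor_eq_zero.2] <;> rw [div_lt_one hpos]
  exacts [(le_max_right x y).trans_lt hn, (le_max_left x y).trans_lt hn]

lemma abs_sub_lt_of_mem_dyadicScales {x y : ℝ} {i : ℤ} (hx : 0 ≤ x) (hy : 0 ≤ y)
    (hi : i ∈ dyadicScales x y) : |x - y| < 2 ^ i := by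
  obtain ⟨hx₁, hx₂⟩ := mem_Ico_iff_dyadicIndex.2 ⟨hx, rfl⟩
  obtain ⟨hy₁, hy₂⟩ := mem_Ico_iff_dyadicIndex.2 ⟨hy, (hi : dyadicIndex i x = _).symm⟩
  rw [abs_sub_lt_iff]
  constructor <;> linarith

lemma bddBelow_dyadicScales {x y : ℝ} (hx : 0 ≤ x) (hy : 0 ≤ y) (hxy : x ≠ y) :
    BddBelow (dyadicScales x y) := by
  obtain ⟨n, hn, -⟩ := exists_mem_Ico_zpow (abs_pos.2 (sub_ne_zero.2 hxy)) one_lt_two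
  refine ⟨n, fun i hi => ?_⟩
  exact ((zpow_lt_zpow_iff_right₀ one_lt_two).1
    (hn.trans_lt (abs_sub_lt_of_mem_dyadicScales hx hy hi))).le

lemma exists_isLeast_dyadicScales {x y : ℝ} (hx : 0 ≤ x) (hy : 0 ≤ y) (hxy : x ≠ y) :
    ∃ J, IsLeast (dyadicScales x y) J :=
  have hbdd := bddBelow_dyadicScales hx hy hxy
  ⟨_, Int.csInf_mem (dyadicScales_nonempty x y) hbdd, fun _ hi => csInf_le hbdd hi⟩

lemma isLeast_dyadicScales_iff {x y : ℝ} {j : ℤ} :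
    IsLeast (dyadicScales x y) j ↔ j ∈ dyadicScales x y ∧ j - 1 ∉ dyadicScales x y := by
  refine ⟨fun h => ⟨h.1, fun h' => by linarith [h.2 h']⟩, fun ⟨hj, hj'⟩ => ⟨hj, fun i hi => ?_⟩⟩
  by_contra! hij
  exact hj' (dyadicScales_mono hi (by omega))

lemma dyadicDist_self (x : ℝ) : dyadicDist x x = 0 := if_pos rfl

lemma dyadicDist_eq_sInf {x y : ℝ} (hx : 0 ≤ x) (hy : 0 ≤ y) (hxy : x ≠ y) :
    dyadicDist x y = sInf ((fun i : ℤ => (2 : ℝ) ^ i) '' dyadicScales x y) := by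
  rw [dyadicDist, if_neg hxy]
  congr 1
  ext r
  simp only [mem_ofPred_eq, mem_image, dyadicScales, mem_Ico_iff_dyadicIndex, hx, hy, true_and]
  constructor
  · rintro ⟨j, k, rfl, hxk, hyk⟩
    exact ⟨-j, hxk.trans hyk.symm, rfl⟩
  · rintro ⟨i, hi, rfl⟩
    exact ⟨-i, dyadicIndex i x, by rw [neg_neg], by rw [neg_neg], by rw [neg_neg, hi]⟩

lemma dyadicDist_eq_zpow_of_isLeast {x y : ℝ} {J : ℤ} (hx : 0 ≤ x) (hy : 0 ≤ y) (hxy : x ≠ y)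
    (hJ : IsLeast (dyadicScales x y) J) : dyadicDist x y = 2 ^ J := by
  rw [dyadicDist_eq_sInf hx hy hxy]
  exact ((zpow_right_strictMono₀ one_lt_two).monotone.map_isLeast hJ).csInf_eq

lemma exists_dyadicDist_eq_zpow {x y : ℝ} (hx : 0 ≤ x) (hy : 0 ≤ y) (hxy : x ≠ y) :
    ∃ J : ℤ, dyadicDist x y = 2 ^ J :=
  (exists_isLeast_dyadicScales hx hy hxy).imp fun _ => dyadicDist_eq_zpow_of_isLeast hx hy hxy

lemma dyadicDist_eq_zpow_iff {x y : ℝ} {j : ℤ} (hx : 0 ≤ x) (hy : 0 ≤ y) :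
    dyadicDist x y = 2 ^ j ↔ x ≠ y ∧ IsLeast (dyadicScales x y) j := by
  rcases eq_or_ne x y with rfl | hxy
  · simp only [dyadicDist_self, ne_eq, not_true_eq_false, false_and, iff_false]
    exact (zpow_pos two_pos j).ne
  obtain ⟨J, hJ⟩ := exists_isLeast_dyadicScales hx hy hxy
  rw [dyadicDist_eq_zpow_of_isLeast hx hy hxy hJ, zpow_right_inj₀ two_pos (by norm_num)]
  exact ⟨fun h => ⟨hxy, h ▸ hJ⟩, fun h => hJ.unique h.2⟩

lemma Nat.div_two_eq_and_ne_iff {a b : ℕ} :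
    a / 2 = b / 2 ∧ a ≠ b ↔ ∃ k, (a = 2 * k ∧ b = 2 * k + 1) ∨ (a = 2 * k + 1 ∧ b = 2 * k) := by
  constructor
  · exact fun h => ⟨a / 2, by omega⟩
  · rintro ⟨k, ⟨rfl, rfl⟩ | ⟨rfl, rfl⟩⟩ <;> omega

lemma dyadicDist_eq_zpow_iff_dyadicIndex {x y : ℝ} {j : ℤ} (hx : 0 ≤ x) (hy : 0 ≤ y) :
    dyadicDist x y = 2 ^ j ↔ ∃ k : ℕ,
      (dyadicIndex (j - 1) x = 2 * k ∧ dyadicIndex (j - 1) y = 2 * k + 1) ∨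
        (dyadicIndex (j - 1) x = 2 * k + 1 ∧ dyadicIndex (j - 1) y = 2 * k) := by
  rw [dyadicDist_eq_zpow_iff hx hy, isLeast_dyadicScales_iff, ← Nat.div_two_eq_and_ne_iff]
  obtain ⟨i, rfl⟩ : ∃ i, j = i + 1 := ⟨j - 1, by omega⟩
  simp only [dyadicScales, mem_ofPred_eq, dyadicIndex_add_one, add_sub_cancel_right]
  constructor
  · rintro ⟨-, h, h'⟩
    exact ⟨h, h'⟩
  · rintro ⟨h, h'⟩
    exact ⟨fun hxy => h' (hxy ▸ rfl), h, h'⟩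

/-- Lemma 1 (a): the level sets of the dyadic distance. A level set `L(λ)` is empty
unless `λ` is an integer power of `2`; the level set at value `2^j` is the union, over the
dyadic intervals `I` of length `2^j`, of `(I_l × I_r) ∪ (I_r × I_l)` where `I_l, I_r` are the
halves of `I`; and `δ(x,y) = Σ_{j∈ℤ} 2^j χ_{L(2^j)}(x,y)`. -/
theorem dyadic_level_sets :
    (∀ lam : ℝ, 0 < lam → (∀ j : ℤ, lam ≠ (2:ℝ) ^ j) →
      {p : ℝ × ℝ | 0 ≤ p.1 ∧ 0 ≤ p.2 ∧ dyadicDist p.1 p.2 = lam} = ∅) ∧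
    (∀ j : ℤ,
      {p : ℝ × ℝ | 0 ≤ p.1 ∧ 0 ≤ p.2 ∧ dyadicDist p.1 p.2 = (2:ℝ) ^ j} =
        ⋃ k : ℕ,
          (Set.Ico ((k : ℝ) * (2:ℝ) ^ j) ((k : ℝ) * (2:ℝ) ^ j + (2:ℝ) ^ (j - 1)) ×ˢ
              Set.Ico ((k : ℝ) * (2:ℝ) ^ j + (2:ℝ) ^ (j - 1)) (((k : ℝ) + 1) * (2:ℝ) ^ j)) ∪
            (Set.Ico ((k : ℝ) * (2:ℝ) ^ j + (2:ℝ) ^ (j - 1)) (((k : ℝ) + 1) * (2:ℝ) ^ j) ×ˢ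
              Set.Ico ((k : ℝ) * (2:ℝ) ^ j) ((k : ℝ) * (2:ℝ) ^ j + (2:ℝ) ^ (j - 1)))) ∧
    (∀ x y : ℝ, 0 ≤ x → 0 ≤ y →
      dyadicDist x y =
        ∑' j : ℤ, Set.indicator {p : ℝ × ℝ | dyadicDist p.1 p.2 = (2:ℝ) ^ j}
          (fun _ => (2:ℝ) ^ j) (x, y)) := by
  refine ⟨fun lam hlam hpow => ?_, fun j => ?_, fun x y hx hy => ?_⟩
  · refine eq_empty_iff_forall_notMem.2 fun ⟨x, y⟩ ⟨hx, hy, hd⟩ => ?_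
    rcases eq_or_ne x y with rfl | hxy
    · exact hlam.ne' (hd.symm.trans (dyadicDist_self x))
    · obtain ⟨J, hJ⟩ := exists_dyadicDist_eq_zpow hx hy hxy
      exact hpow J (hd ▸ hJ)
  · ext ⟨x, y⟩
    simp only [mem_ofPred_eq, mem_iUnion, mem_union, mem_prod, mem_Ico_left_half_iff,
      mem_Ico_right_half_iff]
    constructor
    · rintro ⟨hx, hy, hd⟩
      obtain ⟨k, h⟩ := (dyadicDist_eq_zpow_iff_dyadicIndex hx hy).1 hd
      exact ⟨k, by tauto⟩
    · rintro ⟨k, ⟨⟨hx, hxk⟩, hy, hyk⟩ | ⟨⟨hx, hxk⟩, hy, hyk⟩⟩ <;>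
        exact ⟨hx, hy, (dyadicDist_eq_zpow_iff_dyadicIndex hx hy).2 ⟨k, by tauto⟩⟩
  · rcases eq_or_ne x y with rfl | hxy
    · simp [dyadicDist_self, (zpow_pos (two_pos : (0 : ℝ) < 2) _).ne]
    obtain ⟨J, hJ⟩ := exists_dyadicDist_eq_zpow hx hy hxy
    have hmem (j : ℤ) : (x, y) ∈ {p : ℝ × ℝ | dyadicDist p.1 p.2 = (2 : ℝ) ^ j} ↔ j = J := by
      rw [mem_ofPred_eq, hJ, zpow_right_inj₀ two_pos (by norm_num), eq_comm]
    rw [tsum_eq_single J fun j hj => indicator_of_notMem (mt (hmem j).1 hj) _,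
      indicator_of_mem ((hmem J).2 rfl), hJ]
end

section
/- For every α > −1, every x ∈ ℝ⁺ and every r > 0, with c(α) = 2^{-1}(1 − 2^{-(1+α)})^{-1}, one has c(α)·2^{-(1+α)}·r^{1+α} ≤ ∫_{B_δ(x,r)} δ(x,y)^α dy ≤ c(α)·r^{1+α}. -/
/-! For `x ≥ 0` and `y ≠ x`, `δ(x, y) = 2^{-J}` where `J` is the last generation whose dyadic
interval containing `x` still contains `y`. Hence `B_δ(x, r)` is the dyadic interval `I ∋ x` of
length `s = 2^{⌈log₂ r⌉ - 1}`, so that `s < r ≤ 2s`. Up to the point `x`, `I` is the disjoint union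
of the annuli `I_{j+n}(x) \ I_{j+n+1}(x)`, of measure `2^{-n-1} s`, on which `δ(x, ·) = 2^{-n} s`;
summing the geometric series gives `∫_I δ(x, y)^α dy = c(α) s^{1+α}`. -/

open MeasureTheory Set Filter

open Function

theorem hasSum_setIntegral_iUnion_of_eqOn_const {X E ι : Type*} [MeasurableSpace X]
    [NormedAddCommGroup E] [NormedSpace ℝ E] [CompleteSpace E] [Countable ι] {μ : Measure X}
    {s : ι → Set X} {f : X → E} {c : ι → E} (hs : ∀ i, MeasurableSet (s i))
    (hd : Pairwise (Disjoint on s)) (hμ : ∀ i, μ (s i) ≠ ⊤) (hf : ∀ i, EqOn f (fun _ ↦ c i) (s i))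
    (hc : Summable fun i ↦ μ.real (s i) * ‖c i‖) :
    HasSum (fun i ↦ μ.real (s i) • c i) (∫ x in ⋃ i, s i, f x ∂μ) := by
  have hint : ∀ i, IntegrableOn f (s i) μ := fun i ↦
    (integrableOn_const (hμ i)).congr_fun (hf i).symm (hs i)
  have hval : ∀ i, ∫ x in s i, f x ∂μ = μ.real (s i) • c i := fun i ↦ by
    rw [setIntegral_congr_fun (hs i) (hf i), setIntegral_const]
  have hnorm : ∀ i, ∫ x in s i, ‖f x‖ ∂μ = μ.real (s i) * ‖c i‖ := fun i ↦ by
    rw [setIntegral_congr_fun (hs i) (fun x hx ↦ congrArg norm (hf i hx)), setIntegral_const,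
      smul_eq_mul]
  simpa only [hval] using hasSum_integral_iUnion hs hd
    (integrableOn_iUnion_of_summable_integral_norm hint (by simpa only [hnorm] using hc))

-- The paper's `I^j_k` with `k = ⌊x 2^j⌋`: for `x ≥ 0`, the generation-`j` dyadic interval
-- containing `x`.
def dyadicInterval (x : ℝ) (j : ℤ) : Set ℝ :=
  Ico (⌊x * 2 ^ j⌋₊ * 2 ^ (-j)) ((⌊x * 2 ^ j⌋₊ + 1) * 2 ^ (-j))

theorem mem_Ico_natCast_mul_two_zpow_iff {z : ℝ} (hz : 0 ≤ z) (j : ℤ) (k : ℕ) :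
    z ∈ Ico ((k : ℝ) * 2 ^ (-j)) ((k + 1) * 2 ^ (-j)) ↔ ⌊z * 2 ^ j⌋₊ = k := by
  have h2j : (0 : ℝ) < 2 ^ j := zpow_pos two_pos j
  rw [Nat.floor_eq_iff (by positivity), zpow_neg, ← div_eq_mul_inv, ← div_eq_mul_inv, mem_Ico,
    div_le_iff₀ h2j, lt_div_iff₀ h2j]

theorem mem_dyadicInterval_iff {x z : ℝ} (hz : 0 ≤ z) (j : ℤ) :
    z ∈ dyadicInterval x j ↔ ⌊z * 2 ^ j⌋₊ = ⌊x * 2 ^ j⌋₊ :=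
  mem_Ico_natCast_mul_two_zpow_iff hz j _

theorem nonneg_of_mem_dyadicInterval {x z : ℝ} {j : ℤ} (h : z ∈ dyadicInterval x j) : 0 ≤ z :=
  le_trans (by positivity) h.1

theorem mem_dyadicInterval_self {x : ℝ} (hx : 0 ≤ x) (j : ℤ) : x ∈ dyadicInterval x j :=
  (mem_dyadicInterval_iff hx j).2 rfl

theorem natFloor_mul_two_zpow_eq_div (w : ℝ) (j : ℤ) (m : ℕ) :
    ⌊w * 2 ^ j⌋₊ = ⌊w * 2 ^ (j + m)⌋₊ / 2 ^ m := by
  rw [← Nat.floor_div_natCast, zpow_add₀ two_ne_zero, Nat.cast_pow, Nat.cast_ofNat, zpow_natCast,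
    ← mul_assoc, mul_div_cancel_right₀ _ (pow_ne_zero m two_ne_zero)]

theorem dyadicInterval_antitone (x : ℝ) : Antitone (dyadicInterval x) := by
  intro j j' hj z hz
  have hz0 := nonneg_of_mem_dyadicInterval hz
  obtain ⟨m, rfl⟩ := Int.le.dest hj
  rw [mem_dyadicInterval_iff hz0] at hz ⊢
  rw [natFloor_mul_two_zpow_eq_div z j m, natFloor_mul_two_zpow_eq_div x j m, hz]

theorem volume_dyadicInterval (x : ℝ) (j : ℤ) :
    volume (dyadicInterval x j) = ENNReal.ofReal (2 ^ (-j)) := by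
  rw [dyadicInterval, Real.volume_Ico]
  ring_nf

theorem abs_sub_lt_of_mem_dyadicInterval {x y : ℝ} (hx : 0 ≤ x) {j : ℤ}
    (hy : y ∈ dyadicInterval x j) : |y - x| < 2 ^ (-j) := by
  obtain ⟨hx₁, hx₂⟩ := mem_dyadicInterval_self hx j
  obtain ⟨hy₁, hy₂⟩ := hy
  rw [abs_sub_lt_iff]
  constructor <;> linarith

theorem exists_mem_dyadicInterval {x y : ℝ} (hy : 0 ≤ y) :
    ∃ j, y ∈ dyadicInterval x j := by
  obtain ⟨n, hn⟩ := pow_unbounded_of_one_lt (max x y) one_lt_two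
  have hfloor : ∀ w, w ≤ max x y → ⌊w * 2 ^ (-(n : ℤ))⌋₊ = 0 := fun w hw ↦ by
    rw [Nat.floor_eq_zero, zpow_neg, zpow_natCast, ← div_eq_mul_inv, div_lt_one (by positivity)]
    exact hw.trans_lt hn
  refine ⟨-n, (mem_dyadicInterval_iff hy _).2 ?_⟩
  rw [hfloor y le_sup_right, hfloor x le_sup_left]

theorem bddAbove_setOf_mem_dyadicInterval {x y : ℝ} (hx : 0 ≤ x) (hxy : x ≠ y) :
    BddAbove {j | y ∈ dyadicInterval x j} := by
  have hpos : 0 < |y - x| := abs_pos.2 (sub_ne_zero.2 hxy.symm)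
  refine ⟨-Int.log 2 |y - x|, fun j hj ↦ ?_⟩
  have := (Int.zpow_log_le_self (b := 2) one_lt_two hpos).trans_lt
    (abs_sub_lt_of_mem_dyadicInterval hx hj)
  push_cast at this
  have := (zpow_lt_zpow_iff_right₀ one_lt_two).1 this
  omega

theorem dyadicDist_eq_sInf_image {x y : ℝ} (hx : 0 ≤ x) (hy : 0 ≤ y) (hxy : x ≠ y) :
    dyadicDist x y = sInf ((fun j : ℤ ↦ (2 : ℝ) ^ (-j)) '' {j | y ∈ dyadicInterval x j}) := by
  rw [dyadicDist, if_neg hxy]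
  congr 1
  ext r
  simp only [mem_ofPred_eq, mem_image, mem_Ico_natCast_mul_two_zpow_iff hx,
    mem_Ico_natCast_mul_two_zpow_iff hy, mem_dyadicInterval_iff hy]
  constructor
  · rintro ⟨j, k, rfl, hxk, hyk⟩
    exact ⟨j, hyk.trans hxk.symm, rfl⟩
  · rintro ⟨j, hj, rfl⟩
    exact ⟨j, _, rfl, rfl, hj⟩

theorem exists_dyadicDist_eq_two_zpow {x y : ℝ} (hx : 0 ≤ x) (hy : 0 ≤ y) (hxy : x ≠ y) :
    ∃ J : ℤ, dyadicDist x y = 2 ^ (-J) ∧ ∀ j, y ∈ dyadicInterval x j ↔ j ≤ J := by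
  set S := {j | y ∈ dyadicInterval x j}
  have hbdd : BddAbove S := bddAbove_setOf_mem_dyadicInterval hx hxy
  have hmem : sSup S ∈ S := Int.csSup_mem (exists_mem_dyadicInterval hy) hbdd
  have hiff : ∀ j, j ∈ S ↔ j ≤ sSup S := fun j ↦
    ⟨fun hj ↦ le_csSup hbdd hj, fun hj ↦ dyadicInterval_antitone x hj hmem⟩
  refine ⟨sSup S, ?_, hiff⟩
  rw [dyadicDist_eq_sInf_image hx hy hxy]
  refine IsLeast.csInf_eq ⟨mem_image_of_mem _ hmem, ?_⟩
  rintro _ ⟨j, hj, rfl⟩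
  exact zpow_le_zpow_right₀ one_le_two (neg_le_neg ((hiff j).1 hj))

theorem dyadicDist_lt_iff_mem_dyadicInterval {x y r : ℝ} (hx : 0 ≤ x) (hy : 0 ≤ y) (hr : 0 < r) :
    dyadicDist x y < r ↔ y ∈ dyadicInterval x (1 - Int.clog 2 r) := by
  rcases eq_or_ne x y with rfl | hxy
  · simp [dyadicDist, hr, mem_dyadicInterval_self hx]
  obtain ⟨J, hJ, hiff⟩ := exists_dyadicDist_eq_two_zpow hx hy hxy
  have hlt : (2 : ℝ) ^ (Int.clog 2 r - 1) < r := by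
    exact_mod_cast Int.zpow_pred_clog_lt_self one_lt_two hr
  have hle : r ≤ (2 : ℝ) ^ Int.clog 2 r := by exact_mod_cast Int.self_le_zpow_clog one_lt_two r
  rw [hJ, hiff]
  constructor
  · intro h
    have := (zpow_lt_zpow_iff_right₀ one_lt_two).1 (h.trans_le hle)
    omega
  · intro h
    exact (zpow_le_zpow_right₀ one_le_two (by omega)).trans_lt hlt

theorem setOf_dyadicDist_lt_eq_dyadicInterval {x r : ℝ} (hx : 0 ≤ x) (hr : 0 < r) :
    {y | 0 ≤ y ∧ dyadicDist x y < r} = dyadicInterval x (1 - Int.clog 2 r) := by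
  ext y
  refine ⟨fun ⟨hy, h⟩ ↦ (dyadicDist_lt_iff_mem_dyadicInterval hx hy hr).1 h, fun h ↦ ?_⟩
  have hy := nonneg_of_mem_dyadicInterval h
  exact ⟨hy, (dyadicDist_lt_iff_mem_dyadicInterval hx hy hr).2 h⟩

def dyadicAnnulus (x : ℝ) (j : ℤ) : Set ℝ :=
  dyadicInterval x j \ dyadicInterval x (j + 1)

theorem dyadicDist_eq_of_mem_dyadicAnnulus {x y : ℝ} (hx : 0 ≤ x) {j : ℤ}
    (hy : y ∈ dyadicAnnulus x j) : dyadicDist x y = 2 ^ (-j) := by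
  have hxy : x ≠ y := by
    rintro rfl
    exact hy.2 (mem_dyadicInterval_self hx _)
  obtain ⟨J, hJ, hiff⟩ :=
    exists_dyadicDist_eq_two_zpow hx (nonneg_of_mem_dyadicInterval hy.1) hxy
  have hjJ := (hiff j).1 hy.1
  have hJj := mt (hiff (j + 1)).2 hy.2
  rw [hJ, show J = j by omega]

theorem dyadicInterval_diff_singleton_eq_iUnion {x : ℝ} (hx : 0 ≤ x) (j : ℤ) :
    dyadicInterval x j \ {x} = ⋃ n : ℕ, dyadicAnnulus x (j + n) := by
  ext y
  simp only [dyadicAnnulus, Set.mem_sdiff, mem_iUnion]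
  constructor
  · rintro ⟨hy, hyx⟩
    obtain ⟨J, -, hiff⟩ :=
      exists_dyadicDist_eq_two_zpow hx (nonneg_of_mem_dyadicInterval hy) (Ne.symm hyx)
    have hjJ := (hiff j).1 hy
    refine ⟨(J - j).toNat, (hiff _).2 (by omega), fun h ↦ ?_⟩
    have := (hiff _).1 h
    omega
  · rintro ⟨n, hy, hy'⟩
    refine ⟨dyadicInterval_antitone x (by omega) hy, ?_⟩
    rintro rfl
    exact hy' (mem_dyadicInterval_self hx _)

theorem pairwise_disjoint_dyadicAnnulus (x : ℝ) (j : ℤ) :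
    Pairwise (Disjoint on fun n : ℕ ↦ dyadicAnnulus x (j + n)) := by
  refine (pairwise_disjoint_on _).2 fun m n hmn ↦ disjoint_left.2 fun z hm hn ↦
    hm.2 (dyadicInterval_antitone x ?_ hn.1)
  omega

theorem measureReal_dyadicAnnulus (x : ℝ) (j : ℤ) :
    volume.real (dyadicAnnulus x j) = 2 ^ (-j) / 2 := by
  rw [dyadicAnnulus, measureReal_sdiff (dyadicInterval_antitone x (by omega)) measurableSet_Ico
    (by rw [volume_dyadicInterval]; exact ENNReal.ofReal_ne_top), measureReal_def, measureReal_def,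
    volume_dyadicInterval, volume_dyadicInterval, ENNReal.toReal_ofReal (by positivity),
    ENNReal.toReal_ofReal (by positivity), neg_add, zpow_add₀ two_ne_zero, zpow_neg_one]
  ring

theorem two_zpow_div_two_mul_rpow (j : ℤ) (n : ℕ) (α : ℝ) :
    (2 : ℝ) ^ (-(j + n)) / 2 * ((2 : ℝ) ^ (-(j + n))) ^ α =
      2⁻¹ * ((2 : ℝ) ^ (-j)) ^ (1 + α) * ((2 : ℝ) ^ (-(1 + α))) ^ n := by
  have h2 : (0 : ℝ) < 2 := two_pos
  rw [← Real.rpow_intCast, ← Real.rpow_intCast, ← Real.rpow_natCast, ← Real.rpow_mul h2.le,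
    ← Real.rpow_mul h2.le, ← Real.rpow_mul h2.le, ← Real.rpow_neg_one 2, div_eq_mul_inv,
    ← Real.rpow_neg_one 2, ← Real.rpow_add h2, ← Real.rpow_add h2, ← Real.rpow_add h2,
    ← Real.rpow_add h2]
  congr 1
  push_cast
  ring

theorem integral_dyadicInterval_dyadicDist_rpow {x : ℝ} (hx : 0 ≤ x) {α : ℝ} (hα : -1 < α)
    (j : ℤ) :
    ∫ y in dyadicInterval x j, dyadicDist x y ^ α =
      2⁻¹ * (1 - (2 : ℝ) ^ (-(1 + α)))⁻¹ * ((2 : ℝ) ^ (-j)) ^ (1 + α) := by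
  set q : ℝ := 2 ^ (-(1 + α))
  have hq : q < 1 := Real.rpow_lt_one_of_one_lt_of_neg one_lt_two (by linarith)
  have hterm : ∀ n : ℕ, volume.real (dyadicAnnulus x (j + n)) * ((2 : ℝ) ^ (-(j + n))) ^ α =
      2⁻¹ * ((2 : ℝ) ^ (-j)) ^ (1 + α) * q ^ n := fun n ↦ by
    rw [measureReal_dyadicAnnulus, two_zpow_div_two_mul_rpow]
  have hgeom : HasSum (fun n : ℕ ↦ 2⁻¹ * ((2 : ℝ) ^ (-j)) ^ (1 + α) * q ^ n)
      (2⁻¹ * ((2 : ℝ) ^ (-j)) ^ (1 + α) * (1 - q)⁻¹) :=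
    (hasSum_geometric_of_lt_one (by positivity) hq).mul_left _
  have hannuli := hasSum_setIntegral_iUnion_of_eqOn_const (μ := volume)
    (s := fun n : ℕ ↦ dyadicAnnulus x (j + n)) (f := fun y ↦ dyadicDist x y ^ α)
    (c := fun n ↦ ((2 : ℝ) ^ (-(j + n))) ^ α)
    (fun n ↦ measurableSet_Ico.diff measurableSet_Ico) (pairwise_disjoint_dyadicAnnulus x j)
    (fun n ↦ ((measure_mono sdiff_subset).trans_lt measure_Ico_lt_top).ne)
    (fun n y hy ↦ congrArg (· ^ α) (dyadicDist_eq_of_mem_dyadicAnnulus hx hy))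
    (hgeom.summable.congr fun n ↦ by rw [Real.norm_of_nonneg (by positivity), hterm])
  simp only [smul_eq_mul, hterm] at hannuli
  rw [← setIntegral_congr_set (sdiff_null_ae_eq_self (measure_singleton x)),
    dyadicInterval_diff_singleton_eq_iUnion hx, hannuli.unique hgeom]
  ring

/-- Lemma 1 (b-i): for `α > -1`, with `c(α) = 2⁻¹(1 - 2^{-(1+α)})⁻¹`,
`c(α)·2^{-(1+α)}·r^{1+α} ≤ ∫_{B_δ(x,r)} δ(x,y)^α dy ≤ c(α)·r^{1+α}`. -/
theorem integral_dyadicDist_rpow_ball (α : ℝ) (hα : -1 < α) (x : ℝ) (hx : 0 ≤ x)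
    (r : ℝ) (hr : 0 < r) :
    (2:ℝ)⁻¹ * (1 - (2:ℝ) ^ (-(1 + α)))⁻¹ * (2:ℝ) ^ (-(1 + α)) * r ^ (1 + α) ≤
        ∫ y in {y : ℝ | 0 ≤ y ∧ dyadicDist x y < r}, dyadicDist x y ^ α ∧
      (∫ y in {y : ℝ | 0 ≤ y ∧ dyadicDist x y < r}, dyadicDist x y ^ α) ≤
        (2:ℝ)⁻¹ * (1 - (2:ℝ) ^ (-(1 + α)))⁻¹ * r ^ (1 + α) := by
  set s : ℝ := 2 ^ (Int.clog 2 r - 1)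
  have hsr : s < r := by exact_mod_cast Int.zpow_pred_clog_lt_self one_lt_two hr
  have hrs : r / 2 ≤ s := by
    rw [div_le_iff₀ two_pos, ← zpow_add_one₀ two_ne_zero, sub_add_cancel]
    exact_mod_cast Int.self_le_zpow_clog one_lt_two r
  have h1α : 0 ≤ 1 + α := by linarith
  have hc : (0 : ℝ) ≤ 2⁻¹ * (1 - 2 ^ (-(1 + α)))⁻¹ := by
    have : (2 : ℝ) ^ (-(1 + α)) < 1 := Real.rpow_lt_one_of_one_lt_of_neg one_lt_two (by linarith)
    have : (0 : ℝ) < 1 - 2 ^ (-(1 + α)) := by linarith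
    positivity
  have hhalf : (2 : ℝ) ^ (-(1 + α)) * r ^ (1 + α) = (r / 2) ^ (1 + α) := by
    rw [Real.div_rpow hr.le zero_le_two, Real.rpow_neg zero_le_two, div_eq_inv_mul]
  rw [setOf_dyadicDist_lt_eq_dyadicInterval hx hr, integral_dyadicInterval_dyadicDist_rpow hx hα,
    neg_sub]
  constructor
  · rw [mul_assoc _ (2 ^ _), hhalf]
    exact mul_le_mul_of_nonneg_left (Real.rpow_le_rpow (by positivity) hrs h1α) hc
  · exact mul_le_mul_of_nonneg_left (Real.rpow_le_rpow (by positivity) hsr.le h1α) hc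
end

section
/- Let K : ℝ⁺×ℝ⁺ → [0,∞) be a function depending only on the dyadic distance (i.e. δ(x,y) = δ(x',y') implies K(x,y) = K(x',y')) and suppose ∫_{ℝ⁺} K(x₀,y) dy = 1 for some x₀ ∈ ℝ⁺. Then there exist k_j ≥ 0 (j ∈ ℤ) such that K(x,y) = k_j whenever δ(x,y) = 2^j, the series Σ_{j∈ℤ} k_j 2^{j−1} converges to 1, and K is a symmetric Markov kernel: K(x,y) = K(y,x) and ∫_{ℝ⁺} K(x,y) dy = 1 for every x ∈ ℝ⁺. -/
/-!
For `0 ≤ x`, the points `y ≠ x` of `ℝ⁺` split into the shells `{y : δ(x, y) = 2^j}`, `j ∈ ℤ`,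
and the shell at scale `2^j` is the dyadic interval of length `2^j` around `x` minus the one of
length `2^(j-1)`, so it has measure `2^(j-1)` whatever `x` is. A kernel depending only on `δ` takes
one value `k_j` on each shell, hence `∫ K(x, y) dy = Σ_j k_j 2^(j-1)` for every `x`; normalisation
at `x₀` makes this sum `1`, and symmetry is inherited from `δ(x, y) = δ(y, x)`.
-/

open MeasureTheory Set Filter

namespace Dyadic

noncomputable def dyadicInterval (j : ℤ) (x : ℝ) : Set ℝ :=
  Ico ((⌊x / (2:ℝ) ^ j⌋ : ℝ) * 2 ^ j) (((⌊x / (2:ℝ) ^ j⌋ : ℝ) + 1) * 2 ^ j)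

noncomputable def dyadicShell (j : ℤ) (x : ℝ) : Set ℝ :=
  dyadicInterval j x \ dyadicInterval (j - 1) x

variable {j m : ℤ} {x y : ℝ}

lemma mem_dyadicInterval_iff : y ∈ dyadicInterval j x ↔ ⌊y / (2:ℝ) ^ j⌋ = ⌊x / (2:ℝ) ^ j⌋ := by
  have h := zpow_pos (two_pos (α := ℝ)) j
  rw [Int.floor_eq_iff, dyadicInterval, mem_Ico, le_div_iff₀ h, div_lt_iff₀ h]

lemma self_mem_dyadicInterval (j : ℤ) (x : ℝ) : x ∈ dyadicInterval j x :=
  mem_dyadicInterval_iff.2 rfl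

lemma dyadicInterval_subset_succ (j : ℤ) (x : ℝ) :
    dyadicInterval j x ⊆ dyadicInterval (j + 1) x := by
  have floor_succ (z : ℝ) : ⌊z / (2:ℝ) ^ (j + 1)⌋ = ⌊z / (2:ℝ) ^ j⌋ / (2:ℕ) := by
    rw [← Int.floor_div_natCast, zpow_add_one₀ two_ne_zero, div_div, Nat.cast_ofNat]
  intro y hy
  rw [mem_dyadicInterval_iff] at hy ⊢
  rw [floor_succ, floor_succ, hy]

lemma dyadicInterval_mono (x : ℝ) : Monotone (dyadicInterval · x) :=
  monotone_int_of_le_succ fun j => dyadicInterval_subset_succ j x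

lemma dyadicInterval_subset_Ici (hx : 0 ≤ x) (j : ℤ) : dyadicInterval j x ⊆ Ici 0 := by
  have h := zpow_pos (two_pos (α := ℝ)) j
  have hfloor : (0:ℝ) ≤ ⌊x / (2:ℝ) ^ j⌋ := Int.cast_nonneg (Int.floor_nonneg.2 (by positivity))
  exact fun y hy => (mul_nonneg hfloor h.le).trans hy.1

lemma abs_sub_lt_of_mem_dyadicInterval (hy : y ∈ dyadicInterval j x) : |x - y| < 2 ^ j := by
  obtain ⟨hx₁, hx₂⟩ := self_mem_dyadicInterval j x
  obtain ⟨hy₁, hy₂⟩ := hy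
  rw [abs_sub_lt_iff]
  constructor <;> linarith

lemma exists_isLeast_mem_dyadicInterval (hx : 0 ≤ x) (hy : 0 ≤ y) (hxy : x ≠ y) :
    ∃ m, IsLeast {j | y ∈ dyadicInterval j x} m := by
  obtain ⟨n, hn⟩ := pow_unbounded_of_one_lt (max x y) (one_lt_two (α := ℝ))
  have floor_eq_zero {z : ℝ} (hz : 0 ≤ z) (hzm : z ≤ max x y) : ⌊z / (2:ℝ) ^ (n:ℤ)⌋ = 0 :=
    Int.floor_eq_zero_iff.2
      ⟨by positivity, by rw [div_lt_one (by positivity), zpow_natCast]; linarith⟩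
  have hmem : y ∈ dyadicInterval n x := by
    rw [mem_dyadicInterval_iff, floor_eq_zero hy (le_max_right x y),
      floor_eq_zero hx (le_max_left x y)]
  -- `|x - y| ≥ 2^b` bounds the levels from below
  obtain ⟨b, hb, -⟩ := exists_mem_Ico_zpow (abs_pos.2 (sub_ne_zero.2 hxy)) (one_lt_two (α := ℝ))
  have hbdd : ∀ j, y ∈ dyadicInterval j x → b ≤ j := fun j hj =>
    ((zpow_lt_zpow_iff_right₀ one_lt_two).1 (hb.trans_lt (abs_sub_lt_of_mem_dyadicInterval hj))).le
  exact Int.exists_least_of_bdd ⟨b, hbdd⟩ ⟨n, hmem⟩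

lemma dyadicDist_comm (x y : ℝ) : dyadicDist x y = dyadicDist y x := by
  simp only [dyadicDist, eq_comm (a := x), and_comm]

lemma dyadicDist_eq_sInf (hx : 0 ≤ x) (hxy : x ≠ y) :
    dyadicDist x y = sInf ((fun j : ℤ => (2:ℝ) ^ j) '' {j | y ∈ dyadicInterval j x}) := by
  rw [dyadicDist, if_neg hxy]
  congr 1
  ext r
  constructor
  · rintro ⟨j, k, rfl, hxI, hyI⟩
    have hk : ⌊x / (2:ℝ) ^ (-j)⌋ = k := by
      have h := zpow_pos (two_pos (α := ℝ)) (-j)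
      rw [Int.floor_eq_iff, le_div_iff₀ h, div_lt_iff₀ h]
      exact_mod_cast hxI
    refine ⟨-j, ?_, rfl⟩
    show y ∈ dyadicInterval (-j) x
    rw [dyadicInterval, hk]
    exact_mod_cast hyI
  · rintro ⟨j, hj, rfl⟩
    have hk : ((⌊x / (2:ℝ) ^ j⌋.toNat : ℕ) : ℝ) = ⌊x / (2:ℝ) ^ j⌋ := by
      exact_mod_cast Int.toNat_of_nonneg (Int.floor_nonneg.2 (by positivity))
    refine ⟨-j, ⌊x / (2:ℝ) ^ j⌋.toNat, by rw [neg_neg], ?_⟩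
    rw [neg_neg, hk]
    exact ⟨self_mem_dyadicInterval j x, hj⟩

lemma dyadicDist_eq_zpow_of_isLeast (hx : 0 ≤ x) (hxy : x ≠ y)
    (hm : IsLeast {j | y ∈ dyadicInterval j x} m) : dyadicDist x y = 2 ^ m := by
  rw [dyadicDist_eq_sInf hx hxy]
  exact ((zpow_right_mono₀ one_le_two).map_isLeast hm).csInf_eq

lemma mem_dyadicShell_iff_eq (hm : IsLeast {j | y ∈ dyadicInterval j x} m) :
    y ∈ dyadicShell j x ↔ j = m := by
  have hle (i : ℤ) : y ∈ dyadicInterval i x ↔ m ≤ i :=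
    ⟨fun h => hm.2 h, fun h => dyadicInterval_mono x h hm.1⟩
  rw [dyadicShell, Set.mem_sdiff, hle, hle]
  omega

theorem dyadicDist_eq_zpow_iff (hx : 0 ≤ x) (hy : 0 ≤ y) (hxy : x ≠ y) :
    dyadicDist x y = 2 ^ j ↔ y ∈ dyadicShell j x := by
  obtain ⟨m, hm⟩ := exists_isLeast_mem_dyadicInterval hx hy hxy
  rw [dyadicDist_eq_zpow_of_isLeast hx hxy hm, mem_dyadicShell_iff_eq hm,
    zpow_right_inj₀ two_pos (by norm_num), eq_comm]

lemma self_notMem_dyadicShell (j : ℤ) (x : ℝ) : x ∉ dyadicShell j x :=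
  fun h => h.2 (self_mem_dyadicInterval (j - 1) x)

lemma nonneg_of_mem_dyadicShell (hx : 0 ≤ x) (hy : y ∈ dyadicShell j x) : 0 ≤ y :=
  dyadicInterval_subset_Ici hx j hy.1

lemma dyadicDist_of_mem_dyadicShell (hx : 0 ≤ x) (hy : y ∈ dyadicShell j x) :
    dyadicDist x y = 2 ^ j :=
  (dyadicDist_eq_zpow_iff hx (nonneg_of_mem_dyadicShell hx hy)
    (fun h => self_notMem_dyadicShell j x (h ▸ hy))).2 hy

lemma iUnion_dyadicShell (hx : 0 ≤ x) : ⋃ j, dyadicShell j x = Ici 0 \ {x} := by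
  ext y
  simp only [mem_iUnion, Set.mem_sdiff, mem_Ici, mem_singleton_iff]
  constructor
  · rintro ⟨j, hj⟩
    exact ⟨nonneg_of_mem_dyadicShell hx hj, fun h => self_notMem_dyadicShell j x (h ▸ hj)⟩
  · rintro ⟨hy, hyx⟩
    obtain ⟨m, hm⟩ := exists_isLeast_mem_dyadicInterval hx hy (Ne.symm hyx)
    exact ⟨m, (mem_dyadicShell_iff_eq hm).2 rfl⟩

open Function in
lemma pairwise_disjoint_dyadicShell (x : ℝ) : Pairwise (Disjoint on fun j => dyadicShell j x) :=
  (pairwise_disjoint_on _).2 fun _ _ hij => disjoint_left.2 fun _ hi hj =>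
    hj.2 (dyadicInterval_mono x (by omega) hi.1)

lemma measurableSet_dyadicShell (j : ℤ) (x : ℝ) : MeasurableSet (dyadicShell j x) :=
  measurableSet_Ico.diff measurableSet_Ico

lemma volume_dyadicInterval (j : ℤ) (x : ℝ) :
    volume (dyadicInterval j x) = ENNReal.ofReal (2 ^ j) := by
  rw [dyadicInterval, Real.volume_Ico]
  ring_nf

lemma volume_dyadicShell (j : ℤ) (x : ℝ) :
    volume (dyadicShell j x) = ENNReal.ofReal (2 ^ (j - 1)) := by
  have hpow : (2:ℝ) ^ j = 2 * 2 ^ (j - 1) := by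
    rw [← zpow_one_add₀ two_ne_zero, add_sub_cancel]
  rw [dyadicShell, measure_sdiff (dyadicInterval_mono x (by omega))
    measurableSet_Ico.nullMeasurableSet (by simp [volume_dyadicInterval]),
    volume_dyadicInterval, volume_dyadicInterval, ← ENNReal.ofReal_sub _ (by positivity), hpow]
  ring_nf

lemma dyadicShell_nonempty (j : ℤ) (x : ℝ) : (dyadicShell j x).Nonempty :=
  nonempty_of_measure_ne_zero (μ := volume) (by simp [volume_dyadicShell, zpow_pos])

lemma restrict_Ici_eq_restrict_iUnion_dyadicShell (hx : 0 ≤ x) :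
    volume.restrict (Ici 0) = volume.restrict (⋃ j, dyadicShell j x) := by
  rw [iUnion_dyadicShell hx]
  exact Measure.restrict_congr_set (sdiff_null_ae_eq_self (measure_singleton x)).symm

section ConstantOnShells

variable (hx : 0 ≤ x)
include hx

lemma lintegral_Ici_eq_tsum {f : ℝ → ENNReal} {c : ℤ → ENNReal}
    (hf : ∀ j, EqOn f (fun _ => c j) (dyadicShell j x)) :
    ∫⁻ y in Ici 0, f y = ∑' j, c j * ENNReal.ofReal (2 ^ (j - 1)) := by
  rw [restrict_Ici_eq_restrict_iUnion_dyadicShell hx,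
    lintegral_iUnion (measurableSet_dyadicShell · x) (pairwise_disjoint_dyadicShell x)]
  congr with j
  rw [setLIntegral_congr_fun (measurableSet_dyadicShell j x) (hf j), setLIntegral_const,
    volume_dyadicShell]

lemma ae_restrict_Ici_of_forall_dyadicShell {p : ℝ → Prop}
    (hp : ∀ j, ∀ y ∈ dyadicShell j x, p y) : ∀ᵐ y ∂volume.restrict (Ici 0), p y := by
  rw [restrict_Ici_eq_restrict_iUnion_dyadicShell hx, ae_restrict_iUnion_iff]
  exact fun j => ae_restrict_of_forall_mem (measurableSet_dyadicShell j x) (hp j)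

lemma aestronglyMeasurable_restrict_Ici {f : ℝ → ℝ} {c : ℤ → ℝ}
    (hf : ∀ j, EqOn f (fun _ => c j) (dyadicShell j x)) :
    AEStronglyMeasurable f (volume.restrict (Ici 0)) := by
  rw [restrict_Ici_eq_restrict_iUnion_dyadicShell hx, aestronglyMeasurable_iUnion_iff]
  exact fun j => aestronglyMeasurable_const.congr
    (ae_restrict_of_forall_mem (measurableSet_dyadicShell j x) fun y hy => (hf j hy).symm)

-- Both sides are `0` when the series diverges.
lemma integral_Ici_eq_tsum {f : ℝ → ℝ} {c : ℤ → ℝ} (hc : ∀ j, 0 ≤ c j)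
    (hf : ∀ j, EqOn f (fun _ => c j) (dyadicShell j x)) :
    ∫ y in Ici 0, f y = ∑' j, c j * 2 ^ (j - 1) := by
  have hf_nonneg : 0 ≤ᵐ[volume.restrict (Ici 0)] f :=
    ae_restrict_Ici_of_forall_dyadicShell hx fun j y hy => (hf j hy).symm ▸ hc j
  rw [integral_eq_lintegral_of_nonneg_ae hf_nonneg (aestronglyMeasurable_restrict_Ici hx hf),
    lintegral_Ici_eq_tsum hx (c := fun j => ENNReal.ofReal (c j)) fun j y hy => by rw [hf j hy],
    ENNReal.tsum_toReal_eq fun j => by finiteness]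
  congr with j
  rw [ENNReal.toReal_mul, ENNReal.toReal_ofReal (hc j), ENNReal.toReal_ofReal (by positivity)]

end ConstantOnShells

end Dyadic

open Dyadic in
/-- Lemma 3 (1): a nonnegative kernel depending only on the dyadic distance and normalized at
one point is constant (`= k_j`) on each level set `{δ = 2^j}`, satisfies
`Σ_{j∈ℤ} k_j 2^{j-1} = 1`, and is a symmetric Markov kernel. -/
theorem kernel_of_dyadicDist_markov (K : ℝ → ℝ → ℝ)
    (hK0 : ∀ x y : ℝ, 0 ≤ x → 0 ≤ y → 0 ≤ K x y)
    (hKdist : ∀ x y x' y' : ℝ, 0 ≤ x → 0 ≤ y → 0 ≤ x' → 0 ≤ y' →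
      dyadicDist x y = dyadicDist x' y' → K x y = K x' y')
    (x₀ : ℝ) (hx₀ : 0 ≤ x₀)
    (hKnorm : (∫ y in Set.Ici (0:ℝ), K x₀ y) = 1) :
    ∃ k : ℤ → ℝ, (∀ j : ℤ, 0 ≤ k j) ∧
      (∀ (j : ℤ) (x y : ℝ), 0 ≤ x → 0 ≤ y → dyadicDist x y = (2:ℝ) ^ j → K x y = k j) ∧
      HasSum (fun j : ℤ => k j * (2:ℝ) ^ (j - 1)) 1 ∧
      (∀ x y : ℝ, 0 ≤ x → 0 ≤ y → K x y = K y x) ∧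
      (∀ x : ℝ, 0 ≤ x → (∫ y in Set.Ici (0:ℝ), K x y) = 1) := by
  let y₀ (j : ℤ) : ℝ := (dyadicShell_nonempty j x₀).some
  have hy₀ (j : ℤ) : y₀ j ∈ dyadicShell j x₀ := (dyadicShell_nonempty j x₀).some_mem
  let k (j : ℤ) : ℝ := K x₀ (y₀ j)
  have hk0 (j : ℤ) : 0 ≤ k j := hK0 _ _ hx₀ (nonneg_of_mem_dyadicShell hx₀ (hy₀ j))
  have hk_level (j : ℤ) (x y : ℝ) (hx : 0 ≤ x) (hy : 0 ≤ y) (hxy : dyadicDist x y = 2 ^ j) :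
      K x y = k j :=
    hKdist x y x₀ (y₀ j) hx hy hx₀ (nonneg_of_mem_dyadicShell hx₀ (hy₀ j))
      (by rw [hxy, dyadicDist_of_mem_dyadicShell hx₀ (hy₀ j)])
  have hint (x : ℝ) (hx : 0 ≤ x) : ∫ y in Ici 0, K x y = ∑' j, k j * 2 ^ (j - 1) :=
    integral_Ici_eq_tsum hx hk0 fun j y hy => hk_level j x y hx
      (nonneg_of_mem_dyadicShell hx hy) (dyadicDist_of_mem_dyadicShell hx hy)
  have hsum : ∑' j, k j * (2:ℝ) ^ (j - 1) = 1 := (hint x₀ hx₀).symm.trans hKnorm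
  have hsummable : Summable fun j => k j * (2:ℝ) ^ (j - 1) := by
    by_contra h
    rw [tsum_eq_zero_of_not_summable h] at hsum
    exact zero_ne_one hsum
  exact ⟨k, hk0, hk_level, hsum ▸ hsummable.hasSum,
    fun x y hx hy => hKdist x y y x hx hy hy hx (dyadicDist_comm x y),
    fun x hx => (hint x hx).trans hsum⟩
end

section
/- Let K ∈ 𝒦 with level values k_j, α_l = 2^{-l}(k_{-l} − k_{-l+1}), and Λ_j = Σ_{l>j} α_l for j ∈ ℤ. Then sup_{j∈ℤ} Λ_j = 1 and inf_{j∈ℤ} Λ_j ≥ −1. -/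
/-!
Integrating `K x₀` over the dyadic shells `{y | δ(x₀, y) = 2^j}`, each of measure `2^(j-1)`, shows
that the masses `m_j = k_j 2^(j-1)` are nonnegative and sum to `1`. Since
`α_l = 2 m_{-l} - m_{-l+1}`, Abel summation gives `Λ_j = Σ_{i<-j} m_i - m_{-j}`, a difference of
two numbers in `[0, 1]`, and as `j → -∞` the first tends to `1` and the second to `0`.
-/

open MeasureTheory Set Filter

/-- The sequence `α_l = 2^{-l}(k_{-l} - k_{-l+1})` associated to the level values `k` of a
kernel in `𝒦`. -/
noncomputable def alphaOf (k : ℤ → ℝ) (l : ℤ) : ℝ :=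
  (2:ℝ) ^ (-l) * (k (-l) - k (-l + 1))

/-- The profile `φ(s) = Σ_{l∈ℤ} α_l 2^l χ_{(0,2^{-l}]}(s)` associated to the level values `k`. -/
noncomputable def phiOf (k : ℤ → ℝ) (s : ℝ) : ℝ :=
  ∑' l : ℤ, alphaOf k l * ((2:ℝ) ^ l * (if s ∈ Set.Ioc (0:ℝ) ((2:ℝ) ^ (-l)) then 1 else 0))

/-- The sequence `Λ_j = Σ_{l>j} α_l` associated to the level values `k`. -/
noncomputable def LambdaOf (k : ℤ → ℝ) (j : ℤ) : ℝ :=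
  ∑' m : ℕ, alphaOf k (j + 1 + m)

/-- The Haar function `h^j_k(x) = 2^{j/2}(χ_{[0,1/2)} - χ_{[1/2,1)})(2^j x - k)`,
supported in the dyadic interval `I^j_k = [k·2^{-j},(k+1)·2^{-j})`. -/
noncomputable def haarFn (j : ℤ) (k : ℕ) (x : ℝ) : ℝ :=
  (2:ℝ) ^ ((j : ℝ) / 2) *
    (if (2:ℝ) ^ j * x - (k : ℝ) ∈ Set.Ico (0:ℝ) (1/2) then 1
     else if (2:ℝ) ^ j * x - (k : ℝ) ∈ Set.Ico (1/2 : ℝ) 1 then -1 else 0)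

open Topology

noncomputable def dyadicCell (j : ℤ) (x : ℝ) : Set ℝ :=
  Ico (⌊x / 2 ^ j⌋₊ * 2 ^ j) ((⌊x / 2 ^ j⌋₊ + 1) * 2 ^ j)

/-- The level set `{y | δ(x, y) = 2^j}` of the dyadic distance from `x ≥ 0`. -/
def dyadicShell (j : ℤ) (x : ℝ) : Set ℝ :=
  dyadicCell j x \ dyadicCell (j - 1) x

lemma mem_Ico_natCast_mul_iff {c y : ℝ} (hc : 0 < c) (hy : 0 ≤ y) (n : ℕ) :
    y ∈ Ico (n * c) ((n + 1) * c) ↔ ⌊y / c⌋₊ = n := by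
  rw [Nat.floor_eq_iff (div_nonneg hy hc.le), le_div_iff₀ hc, div_lt_iff₀ hc, mem_Ico]

section DyadicCell

variable {x y : ℝ}

lemma mem_dyadicCell_iff (hy : 0 ≤ y) (j : ℤ) :
    y ∈ dyadicCell j x ↔ ⌊y / 2 ^ j⌋₊ = ⌊x / 2 ^ j⌋₊ :=
  mem_Ico_natCast_mul_iff (by positivity) hy _

lemma mem_dyadicCell_self (hx : 0 ≤ x) (j : ℤ) : x ∈ dyadicCell j x :=
  (mem_dyadicCell_iff hx j).2 rfl

lemma nonneg_of_mem_dyadicCell {j : ℤ} (hy : y ∈ dyadicCell j x) : 0 ≤ y :=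
  le_trans (by positivity) hy.1

lemma dyadicCell_mono (x : ℝ) : Monotone (dyadicCell · x) := by
  refine monotone_int_of_le_succ fun j y hy => ?_
  have hy₀ := nonneg_of_mem_dyadicCell hy
  have halve : ∀ z : ℝ, ⌊z / 2 ^ (j + 1)⌋₊ = ⌊z / 2 ^ j⌋₊ / 2 := fun z => by
    rw [zpow_add_one₀ two_ne_zero, ← div_div, Nat.floor_div_ofNat]
  rw [mem_dyadicCell_iff hy₀] at hy ⊢
  rw [halve, halve, hy]

lemma mem_dyadicCell_of_lt {j : ℤ} (hx : x < 2 ^ j) (hy₀ : 0 ≤ y) (hy : y < 2 ^ j) :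
    y ∈ dyadicCell j x := by
  rw [mem_dyadicCell_iff hy₀, Nat.floor_eq_zero.2 ((div_lt_one (by positivity)).2 hy),
    Nat.floor_eq_zero.2 ((div_lt_one (by positivity)).2 hx)]

lemma abs_sub_lt_of_mem_dyadicCell {j : ℤ} {z : ℝ} (hy : y ∈ dyadicCell j x)
    (hz : z ∈ dyadicCell j x) : |y - z| < 2 ^ j := by
  rw [abs_sub_lt_iff]
  constructor <;> linarith [hy.1, hy.2, hz.1, hz.2]

lemma volume_real_dyadicCell (j : ℤ) (x : ℝ) : volume.real (dyadicCell j x) = 2 ^ j := by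
  rw [dyadicCell, Real.volume_real_Ico_of_le (by gcongr; linarith)]
  ring

lemma measurableSet_dyadicShell (j : ℤ) (x : ℝ) : MeasurableSet (dyadicShell j x) :=
  measurableSet_Ico.diff measurableSet_Ico

lemma volume_real_dyadicShell (j : ℤ) (x : ℝ) : volume.real (dyadicShell j x) = 2 ^ (j - 1) := by
  rw [dyadicShell, measureReal_sdiff (dyadicCell_mono x (by omega)) measurableSet_Ico
    (by simp [dyadicCell]), volume_real_dyadicCell, volume_real_dyadicCell,
    ← sub_add_cancel j 1, zpow_add_one₀ two_ne_zero, add_sub_cancel_right]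
  ring

lemma pairwise_disjoint_dyadicShell (x : ℝ) :
    Pairwise (Function.onFun Disjoint fun j => dyadicShell j x) :=
  (pairwise_disjoint_on _).2 fun i j hij =>
    disjoint_left.2 fun _ hi hj => hj.2 (dyadicCell_mono x (by omega) hi.1)

lemma dyadicDist_eq_of_mem_dyadicShell (hx : 0 ≤ x) {j : ℤ} (hy : y ∈ dyadicShell j x) :
    dyadicDist x y = 2 ^ j := by
  have hy₀ := nonneg_of_mem_dyadicCell hy.1
  have hxy : x ≠ y := by rintro rfl; exact hy.2 (mem_dyadicCell_self hx _)
  rw [dyadicDist, if_neg hxy]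
  refine IsLeast.csInf_eq ⟨⟨-j, ⌊x / 2 ^ j⌋₊, by rw [neg_neg], ?_, ?_⟩, ?_⟩
  · rw [neg_neg]; exact mem_dyadicCell_self hx j
  · rw [neg_neg]; exact hy.1
  rintro _ ⟨i, n, rfl, hxI, hyI⟩
  have hc : (0 : ℝ) < 2 ^ (-i) := by positivity
  have hyi : y ∈ dyadicCell (-i) x := by
    rw [mem_dyadicCell_iff hy₀, (mem_Ico_natCast_mul_iff hc hy₀ n).1 hyI,
      (mem_Ico_natCast_mul_iff hc hx n).1 hxI]
  by_contra! hlt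
  have hij : -i ≤ j - 1 := by
    have := (zpow_lt_zpow_iff_right₀ one_lt_two).1 hlt
    omega
  exact hy.2 (dyadicCell_mono x hij hyi)

lemma iUnion_dyadicShell (hx : 0 ≤ x) : ⋃ j, dyadicShell j x = Ici 0 \ {x} := by
  ext y
  simp only [mem_iUnion, dyadicShell, Set.mem_sdiff, mem_Ici, mem_singleton_iff]
  constructor
  · rintro ⟨j, hy, hy'⟩
    exact ⟨nonneg_of_mem_dyadicCell hy, by rintro rfl; exact hy' (mem_dyadicCell_self hx _)⟩
  rintro ⟨hy₀, hyx⟩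
  obtain ⟨top, -, htop⟩ :=
    exists_mem_Ico_zpow (x := max x y + 1) (by positivity) one_lt_two
  obtain ⟨bot, hbot, -⟩ := exists_mem_Ico_zpow (abs_pos.2 (sub_ne_zero.2 hyx)) one_lt_two
  have hin : y ∈ dyadicCell (top + 1) x :=
    mem_dyadicCell_of_lt (by linarith [le_max_left x y]) hy₀ (by linarith [le_max_right x y])
  have hout : ∀ i ≤ bot, y ∉ dyadicCell i x := fun i hi hyi =>
    (abs_sub_lt_of_mem_dyadicCell hyi (mem_dyadicCell_self hx i)).not_ge
      ((zpow_le_zpow_right₀ one_le_two hi).trans hbot)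
  obtain ⟨j, hj, hleast⟩ := Int.exists_least_of_bdd
    ⟨bot + 1, fun i hi => by by_contra! h; exact hout i (by omega) hi⟩ ⟨_, hin⟩
  exact ⟨j, hj, fun h => by have := hleast _ h; omega⟩

lemma exists_dyadicDist_eq (hx : 0 ≤ x) (j : ℤ) : ∃ y, 0 ≤ y ∧ dyadicDist x y = 2 ^ j := by
  have hpos : volume (dyadicShell j x) ≠ 0 := fun h => by
    have := volume_real_dyadicShell j x
    rw [measureReal_def, h, ENNReal.toReal_zero] at this
    exact (zpow_pos two_pos (j - 1)).ne this
  obtain ⟨y, hy⟩ := nonempty_of_measure_ne_zero hpos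
  exact ⟨y, nonneg_of_mem_dyadicCell hy.1, dyadicDist_eq_of_mem_dyadicShell hx hy⟩

end DyadicCell

/-- The mass that a kernel with level values `k` puts on `dyadicShell j x`. -/
noncomputable def levelMass (k : ℤ → ℝ) (j : ℤ) : ℝ :=
  k j * 2 ^ (j - 1)

section Kernel

variable {f : ℝ → ℝ} {k : ℤ → ℝ} {x₀ : ℝ}

lemma hasSum_levelMass (hx₀ : 0 ≤ x₀)
    (hf : ∀ (j : ℤ) (y : ℝ), 0 ≤ y → dyadicDist x₀ y = 2 ^ j → f y = k j)
    (hint : ∫ y in Ici 0, f y = 1) : HasSum (levelMass k) 1 := by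
  have hfi : IntegrableOn f (Ici 0) := by
    by_contra h
    rw [integral_undef h] at hint
    exact zero_ne_one hint
  have hshell : ∀ j, ∫ y in dyadicShell j x₀, f y = levelMass k j := fun j => by
    rw [setIntegral_congr_fun (measurableSet_dyadicShell j x₀) fun y hy =>
        hf j y (nonneg_of_mem_dyadicCell hy.1) (dyadicDist_eq_of_mem_dyadicShell hx₀ hy),
      setIntegral_const, volume_real_dyadicShell, smul_eq_mul, levelMass, mul_comm]
  have hunion : ⋃ j, dyadicShell j x₀ =ᵐ[volume] Ici 0 := by
    rw [iUnion_dyadicShell hx₀]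
    exact sdiff_null_ae_eq_self Real.volume_singleton
  have hsum := hasSum_integral_iUnion (measurableSet_dyadicShell · x₀)
    (pairwise_disjoint_dyadicShell x₀) (hfi.congr_set_ae hunion)
  rwa [funext hshell, setIntegral_congr_set hunion, hint] at hsum

lemma levelValue_nonneg (hx₀ : 0 ≤ x₀) (hf₀ : ∀ y, 0 ≤ y → 0 ≤ f y)
    (hf : ∀ (j : ℤ) (y : ℝ), 0 ≤ y → dyadicDist x₀ y = 2 ^ j → f y = k j) (j : ℤ) :
    0 ≤ k j := by
  obtain ⟨y, hy, hdist⟩ := exists_dyadicDist_eq hx₀ j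
  exact hf j y hy hdist ▸ hf₀ y hy

end Kernel

section IntSeries

variable {g : ℤ → ℝ} {a : ℝ}

lemma summable_nat_sub (hg : Summable g) (i : ℤ) : Summable fun m : ℕ => g (i - m) :=
  hg.comp_injective fun m n h => by simpa using h

lemma summable_nat_add (hg : Summable g) (i : ℤ) : Summable fun m : ℕ => g (i + m) :=
  hg.comp_injective fun m n h => by simpa using h

lemma HasSum.tsum_nat_sub_add_tsum_nat_add (hg : HasSum g a) (i : ℤ) :
    ∑' m : ℕ, g (i - 1 - m) + ∑' m : ℕ, g (i + m) = a := by
  have hshift : HasSum (fun n : ℤ => g (n + i)) a := (Equiv.addRight i).hasSum_iff.2 hg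
  have hup : HasSum (fun m : ℕ => g (m + i)) (∑' m : ℕ, g (i + m)) := by
    simp_rw [add_comm _ i]
    exact (summable_nat_add hg.summable i).hasSum
  have hlow : HasSum (fun m : ℕ => g (-((m : ℤ) + 1) + i)) (∑' m : ℕ, g (i - 1 - m)) := by
    have : ∀ m : ℕ, -((m : ℤ) + 1) + i = i - 1 - m := fun m => by ring
    simp_rw [this]
    exact (summable_nat_sub hg.summable (i - 1)).hasSum
  rw [add_comm]
  exact (HasSum.of_nat_of_neg_add_one (f := fun n => g (n + i)) hup hlow).unique hshift

lemma HasSum.tendsto_tsum_nat_sub (hg : HasSum g a) :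
    Tendsto (fun n : ℕ => ∑' m : ℕ, g (n - 1 - m)) atTop (𝓝 a) := by
  have htail := (tendsto_sum_nat_add fun m : ℕ => g m).const_sub a
  rw [sub_zero] at htail
  refine htail.congr fun n => ?_
  rw [← hg.tsum_nat_sub_add_tsum_nat_add n]
  push_cast
  simp only [add_comm (n : ℤ), add_sub_cancel_right]

end IntSeries

section Lambda

variable {k : ℤ → ℝ}

lemma alphaOf_eq_levelMass (k : ℤ → ℝ) (l : ℤ) :
    alphaOf k l = 2 * levelMass k (-l) - levelMass k (-l + 1) := by
  rw [alphaOf, levelMass, levelMass, add_sub_cancel_right, zpow_sub_one₀ two_ne_zero]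
  ring

lemma LambdaOf_eq_tsum_sub (hs : Summable (levelMass k)) (j : ℤ) :
    LambdaOf k j = ∑' m : ℕ, levelMass k (-j - 1 - m) - levelMass k (-j) := by
  have hterm : ∀ m : ℕ, alphaOf k (j + 1 + m) =
      2 * levelMass k (-j - 1 - m) - levelMass k (-j - m) := fun m => by
    rw [alphaOf_eq_levelMass]
    ring_nf
  have hpeel : ∑' m : ℕ, levelMass k (-j - m) =
      levelMass k (-j) + ∑' m : ℕ, levelMass k (-j - 1 - m) := by
    rw [(summable_nat_sub hs (-j)).tsum_eq_zero_add]
    push_cast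
    ring_nf
  rw [LambdaOf, tsum_congr hterm,
    ((summable_nat_sub hs (-j - 1)).mul_left 2).tsum_sub (summable_nat_sub hs (-j)),
    tsum_mul_left, hpeel]
  ring

lemma levelMass_nonneg {j : ℤ} (hk : 0 ≤ k j) : 0 ≤ levelMass k j :=
  mul_nonneg hk (by positivity)

lemma LambdaOf_le_one (hg : HasSum (levelMass k) 1) (hk : ∀ j, 0 ≤ k j) (j : ℤ) :
    LambdaOf k j ≤ 1 := by
  have hup : 0 ≤ ∑' m : ℕ, levelMass k (-j + m) := tsum_nonneg fun m => levelMass_nonneg (hk _)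
  rw [LambdaOf_eq_tsum_sub hg.summable]
  linarith [hg.tsum_nat_sub_add_tsum_nat_add (-j), levelMass_nonneg (hk (-j))]

lemma neg_one_le_LambdaOf (hg : HasSum (levelMass k) 1) (hk : ∀ j, 0 ≤ k j) (j : ℤ) :
    -1 ≤ LambdaOf k j := by
  have hlow : 0 ≤ ∑' m : ℕ, levelMass k (-j - 1 - m) :=
    tsum_nonneg fun m => levelMass_nonneg (hk _)
  rw [LambdaOf_eq_tsum_sub hg.summable]
  linarith [le_hasSum hg (-j) fun i _ => levelMass_nonneg (hk i)]

lemma tendsto_LambdaOf_neg_natCast (hg : HasSum (levelMass k) 1) :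
    Tendsto (fun n : ℕ => LambdaOf k (-n)) atTop (𝓝 1) := by
  have hmass : Tendsto (fun n : ℕ => levelMass k n) atTop (𝓝 0) :=
    (hg.summable.comp_injective Nat.cast_injective).tendsto_atTop_zero
  simpa only [LambdaOf_eq_tsum_sub hg.summable, neg_neg, sub_zero] using
    hg.tendsto_tsum_nat_sub.sub hmass

end Lambda

theorem kernel_Lambda_sup_inf_general (K : ℝ → ℝ → ℝ) (k : ℤ → ℝ)
    (hK0 : ∀ x y : ℝ, 0 ≤ x → 0 ≤ y → 0 ≤ K x y)
    (x₀ : ℝ) (hx₀ : 0 ≤ x₀)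
    (hKnorm : (∫ y in Set.Ici (0:ℝ), K x₀ y) = 1)
    (hk : ∀ (j : ℤ) (x y : ℝ), 0 ≤ x → 0 ≤ y → dyadicDist x y = (2:ℝ) ^ j → K x y = k j) :
    (⨆ j : ℤ, LambdaOf k j) = 1 ∧ -1 ≤ ⨅ j : ℤ, LambdaOf k j := by
  have hk₀ : ∀ (j : ℤ) (y : ℝ), 0 ≤ y → dyadicDist x₀ y = 2 ^ j → K x₀ y = k j :=
    fun j y => hk j x₀ y hx₀
  have hmass := hasSum_levelMass hx₀ hk₀ hKnorm
  have hknn := levelValue_nonneg hx₀ (hK0 x₀ · hx₀) hk₀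
  refine ⟨ciSup_eq_of_forall_le_of_forall_lt_exists_gt (LambdaOf_le_one hmass hknn) fun w hw => ?_,
    le_ciInf (neg_one_le_LambdaOf hmass hknn)⟩
  obtain ⟨n, hn⟩ := ((tendsto_LambdaOf_neg_natCast hmass).eventually (lt_mem_nhds hw)).exists
  exact ⟨_, hn⟩

/-- Lemma 3 (5.g) and (5.h): for `K ∈ 𝒦` with level values `k_j` and associated sequence
`Λ_j = Σ_{l>j} α_l`, one has `sup_j Λ_j = 1` and `inf_j Λ_j ≥ -1`. -/
theorem kernel_Lambda_sup_inf (K : ℝ → ℝ → ℝ) (k : ℤ → ℝ)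
    (hK0 : ∀ x y : ℝ, 0 ≤ x → 0 ≤ y → 0 ≤ K x y)
    (hKdist : ∀ x y x' y' : ℝ, 0 ≤ x → 0 ≤ y → 0 ≤ x' → 0 ≤ y' →
      dyadicDist x y = dyadicDist x' y' → K x y = K x' y')
    (x₀ : ℝ) (hx₀ : 0 ≤ x₀)
    (hKnorm : (∫ y in Set.Ici (0:ℝ), K x₀ y) = 1)
    (hk : ∀ (j : ℤ) (x y : ℝ), 0 ≤ x → 0 ≤ y → dyadicDist x y = (2:ℝ) ^ j → K x y = k j) :
    (⨆ j : ℤ, LambdaOf k j) = 1 ∧ -1 ≤ ⨅ j : ℤ, LambdaOf k j :=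
  kernel_Lambda_sup_inf_general K k hK0 x₀ hx₀ hKnorm hk
end
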